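/- Let S₀, S₁, … be a saturation with respect to the PaRC calculus and S_ω = ⋃_{i≥0} S_i. Suppose a clause C occurs in S_ω (i.e., (C ⋈ R) ∈ S_ω for some R) and θ is a substitution grounding for C. Then the ground clause Cθ has a trace, i.e., there is a finite set {C₁,…,Cₙ} of persistent ground clauses with C₁,…,Cₙ ⊨ Cθ and Cθ ⪰ Cᵢ for all i = 1,…,n. -/

import Mathlib

set_option autoImplicit false

namespace PaRC

/-- First-order terms over a signature `F` with arity function `ar`;
variables are natural numbers. -/
inductive Trm (F : Type) (ar : F → ℕ) : Type
  | var : ℕ → Trm F ar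
  | app : (f : F) → (Fin (ar f) → Trm F ar) → Trm F ar

variable {F : Type} {ar : F → ℕ}

/-- Substitutions. -/
abbrev Subst (F : Type) (ar : F → ℕ) : Type := ℕ → Trm F ar

/-- Applying a substitution to a term. -/
def Trm.subst (σ : Subst F ar) : Trm F ar → Trm F ar
  | .var x => σ x
  | .app f a => .app f (fun i => (a i).subst σ)

/-- Composition of substitutions. -/
def Subst.comp (σ τ : Subst F ar) : Subst F ar := fun x => Trm.subst τ (σ x)

/-- A term is ground if it contains no variables. -/
def Trm.IsGround : Trm F ar → Prop
  | .var _ => False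
  | .app _ a => ∀ i, (a i).IsGround

/-- Free variables of a term. -/
def Trm.fvars : Trm F ar → Set ℕ
  | .var x => {x}
  | .app _ a => ⋃ i, (a i).fvars

/-- Subterm at a position (list of argument indices). -/
def Trm.atPos : Trm F ar → List ℕ → Option (Trm F ar)
  | t, [] => some t
  | .var _, _ :: _ => none
  | .app f a, i :: p => if h : i < ar f then Trm.atPos (a ⟨i, h⟩) p else none

/-- Replace the subterm at a given position. -/
def Trm.replace : Trm F ar → List ℕ → Trm F ar → Trm F ar
  | _, [], u => u
  | .var x, _ :: _, _ => .var x
  | .app f a, i :: p, u =>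
      if h : i < ar f then
        .app f (Function.update a ⟨i, h⟩ (Trm.replace (a ⟨i, h⟩) p u))
      else .app f a

/-- An equality literal: polarity together with the two sides. -/
structure Lit (F : Type) (ar : F → ℕ) : Type where
  pos : Bool
  lhs : Trm F ar
  rhs : Trm F ar

def Lit.subst (σ : Subst F ar) (L : Lit F ar) : Lit F ar :=
  ⟨L.pos, Trm.subst σ L.lhs, Trm.subst σ L.rhs⟩

def Lit.IsGround (L : Lit F ar) : Prop := L.lhs.IsGround ∧ L.rhs.IsGround

def Lit.fvars (L : Lit F ar) : Set ℕ := L.lhs.fvars ∪ L.rhs.fvars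

/-- A clause is a (finite) multiset of literals. -/
abbrev Clause (F : Type) (ar : F → ℕ) : Type := Multiset (Lit F ar)

def Clause.subst (σ : Subst F ar) (C : Clause F ar) : Clause F ar := C.map (Lit.subst σ)

def Clause.IsGround (C : Clause F ar) : Prop := ∀ L ∈ C, L.IsGround

def Clause.fvars (C : Clause F ar) : Set ℕ := {x | ∃ L ∈ C, x ∈ L.fvars}

/-- A substitution is grounding for a clause if the instance is ground. -/
def GroundingFor (θ : Subst F ar) (C : Clause F ar) : Prop :=
  Clause.IsGround (Clause.subst θ C)

/-- A term occurs in a clause if it is a subterm of a side of one of its literals. -/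
def OccursIn (u : Trm F ar) (C : Clause F ar) : Prop :=
  ∃ L ∈ C, ∃ p, Trm.atPos L.lhs p = some u ∨ Trm.atPos L.rhs p = some u

/-! ### Semantics: Σ-algebras, entailment and satisfiability -/

/-- A Σ-algebra (first-order structure for the purely equational signature). -/
structure Alg (F : Type) (ar : F → ℕ) : Type 1 where
  carrier : Type
  nonempty : Nonempty carrier
  interp : (f : F) → (Fin (ar f) → carrier) → carrier

def Trm.eval (A : Alg F ar) (v : ℕ → A.carrier) : Trm F ar → A.carrier
  | .var x => v x
  | .app f a => A.interp f (fun i => (a i).eval A v)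

def Lit.holds (A : Alg F ar) (v : ℕ → A.carrier) (L : Lit F ar) : Prop :=
  if L.pos then L.lhs.eval A v = L.rhs.eval A v else L.lhs.eval A v ≠ L.rhs.eval A v

/-- A clause is true in an algebra if it is true under every valuation
(variables are implicitly universally quantified). -/
def Clause.validIn (A : Alg F ar) (C : Clause F ar) : Prop :=
  ∀ v : ℕ → A.carrier, ∃ L ∈ C, Lit.holds A v L

/-- First-order entailment between a set of clauses and a clause. -/
def Entails (S : Set (Clause F ar)) (D : Clause F ar) : Prop :=
  ∀ A : Alg F ar, (∀ C ∈ S, Clause.validIn A C) → Clause.validIn A D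

/-- Satisfiability of a set of clauses. -/
def Satisfiable (S : Set (Clause F ar)) : Prop :=
  ∃ A : Alg F ar, ∀ C ∈ S, Clause.validIn A C

/-! ### Simplification orders and their bag extensions -/

/-- A simplification order: a reduction ordering that is total on ground terms
and has the subterm property. -/
structure SimpOrd (F : Type) (ar : F → ℕ) : Type where
  gt : Trm F ar → Trm F ar → Prop
  trans : ∀ {s t u : Trm F ar}, gt s t → gt t u → gt s u
  irrefl : ∀ s : Trm F ar, ¬ gt s s
  wf : WellFounded (fun s t : Trm F ar => gt t s)
  substStable : ∀ (σ : Subst F ar) {s t : Trm F ar}, gt s t →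
    gt (Trm.subst σ s) (Trm.subst σ t)
  ctxStable : ∀ (s : Trm F ar) (p : List ℕ) {l r : Trm F ar}, (Trm.atPos s p).isSome →
    gt l r → gt (Trm.replace s p l) (Trm.replace s p r)
  subterm : ∀ {s t : Trm F ar} (p : List ℕ), Trm.atPos s p = some t → s ≠ t → gt s t
  totalGround : ∀ {s t : Trm F ar}, s.IsGround → t.IsGround → s ≠ t → gt s t ∨ gt t s

/-- Bag (Dershowitz–Manna multiset) extension of an ordering: `N > M`. -/
def MultGT {α : Type} (r : α → α → Prop) (N M : Multiset α) : Prop :=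
  ∃ X Y Z : Multiset α, X ≠ 0 ∧ N = Z + X ∧ M = Z + Y ∧ ∀ y ∈ Y, ∃ x ∈ X, r x y

/-- The multiset of terms associated to a literal:
`{s, t}` for `s ≈ t` and `{s, s, t, t}` for `s ≉ t`. -/
def Lit.ms (L : Lit F ar) : Multiset (Trm F ar) :=
  if L.pos then {L.lhs, L.rhs} else {L.lhs, L.lhs, L.rhs, L.rhs}

/-- The induced ordering on literals. -/
def litGT (O : SimpOrd F ar) (L M : Lit F ar) : Prop := MultGT O.gt L.ms M.ms

/-- The induced ordering on clauses. -/
def clauseGT (O : SimpOrd F ar) (C D : Clause F ar) : Prop := MultGT (litGT O) C D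

def clauseGE (O : SimpOrd F ar) (C D : Clause F ar) : Prop := clauseGT O C D ∨ C = D

/-- A ground clause `D` is redundant w.r.t. a set `S` of ground clauses if it is
entailed by finitely many clauses of `S` that are all smaller than `D`. -/
def Redundant (O : SimpOrd F ar) (S : Set (Clause F ar)) (D : Clause F ar) : Prop :=
  ∃ Cs : List (Clause F ar), (∀ C ∈ Cs, C ∈ S) ∧
    Entails {C | C ∈ Cs} D ∧ ∀ C ∈ Cs, clauseGT O D C

/-! ### Redundancy formulas and partial clauses -/

/-- Redundancy formulas: first-order formulas over the term algebra extended with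
the interpreted predicates `≻` (the simplification order) and equality. -/
inductive RForm (F : Type) (ar : F → ℕ) : Type
  | falsum : RForm F ar
  | verum : RForm F ar
  | eq (s t : Trm F ar) : RForm F ar
  | gt (s t : Trm F ar) : RForm F ar
  | and (a b : RForm F ar) : RForm F ar
  | or (a b : RForm F ar) : RForm F ar
  | ex (x : ℕ) (a : RForm F ar) : RForm F ar

def RForm.subst (σ : Subst F ar) : RForm F ar → RForm F ar
  | .falsum => .falsum
  | .verum => .verum
  | .eq s t => .eq (Trm.subst σ s) (Trm.subst σ t)
  | .gt s t => .gt (Trm.subst σ s) (Trm.subst σ t)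
  | .and a b => .and (a.subst σ) (b.subst σ)
  | .or a b => .or (a.subst σ) (b.subst σ)
  | .ex x a => .ex x (a.subst fun y => if y = x then Trm.var x else σ y)

def RForm.fvars : RForm F ar → Set ℕ
  | .falsum => ∅
  | .verum => ∅
  | .eq s t => s.fvars ∪ t.fvars
  | .gt s t => s.fvars ∪ t.fvars
  | .and a b => a.fvars ∪ b.fvars
  | .or a b => a.fvars ∪ b.fvars
  | .ex x a => a.fvars \ {x}

/-- Truth of a redundancy formula in the extended term algebra `T_R(Σ)`,
under a valuation `v` mapping variables to (ground) terms. -/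
def RForm.realize (O : SimpOrd F ar) (v : Subst F ar) : RForm F ar → Prop
  | .falsum => False
  | .verum => True
  | .eq s t => Trm.subst v s = Trm.subst v t
  | .gt s t => O.gt (Trm.subst v s) (Trm.subst v t)
  | .and a b => a.realize O v ∧ b.realize O v
  | .or a b => a.realize O v ∨ b.realize O v
  | .ex x a => ∃ g : Trm F ar, g.IsGround ∧ a.realize O (Function.update v x g)

/-- `σ ⊨ R`: every ground instance of `Rσ` is true in `T_R(Σ)`. -/
def RSat (O : SimpOrd F ar) (σ : Subst F ar) (R : RForm F ar) : Prop :=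
  ∀ v : Subst F ar, (∀ x, (v x).IsGround) → RForm.realize O v (RForm.subst σ R)

theorem RForm.falsum_fvars_sub (s : Set ℕ) : RForm.fvars (.falsum : RForm F ar) ⊆ s := by
  intro x hx; simp [RForm.fvars] at hx

/-- `s ⪰ t` as a redundancy formula. -/
def RForm.ge (s t : Trm F ar) : RForm F ar := .or (.gt s t) (.eq s t)

/-- `(s ≐ t) ⪰ l` as a redundancy formula. -/
def Lit.geForm (L : Lit F ar) (l : Trm F ar) : RForm F ar :=
  .or (RForm.ge L.lhs l) (RForm.ge L.rhs l)

/-- `(s ≐ t) ≻ l` as a redundancy formula. -/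
def Lit.gtForm (L : Lit F ar) (l : Trm F ar) : RForm F ar :=
  .or (.gt L.lhs l) (.gt L.rhs l)

/-- `C ⪰ l` as a redundancy formula (disjunction over the literals of `C`). -/
noncomputable def Clause.geForm (C : Clause F ar) (l : Trm F ar) : RForm F ar :=
  C.toList.foldr (fun L acc => RForm.or (Lit.geForm L l) acc) RForm.falsum

/-- `C ≻ l` as a redundancy formula (disjunction over the literals of `C`). -/
noncomputable def Clause.gtForm (C : Clause F ar) (l : Trm F ar) : RForm F ar :=
  C.toList.foldr (fun L acc => RForm.or (Lit.gtForm L l) acc) RForm.falsum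

/-- A partial clause `C ⋈ R`: a clause together with a redundancy formula all of
whose free variables occur in the clause. -/
structure PClause (F : Type) (ar : F → ℕ) : Type where
  cl : Clause F ar
  rf : RForm F ar
  hfv : RForm.fvars rf ⊆ Clause.fvars cl

/-- `⌊C ⋈ R⌋`: the ground instances `Cθ` with `θ ⊭ R`. -/
def pgnd (O : SimpOrd F ar) (pc : PClause F ar) : Set (Clause F ar) :=
  {D | ∃ θ : Subst F ar, D = Clause.subst θ pc.cl ∧ Clause.IsGround D ∧ ¬ RSat O θ pc.rf}

/-- `⌊S⌋` for a set of partial clauses. -/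
def gndS (O : SimpOrd F ar) (S : Set (PClause F ar)) : Set (Clause F ar) :=
  ⋃ pc ∈ S, pgnd O pc

/-- `S*`: all ground instances of clauses occurring in `S`. -/
def gstar (S : Set (PClause F ar)) : Set (Clause F ar) :=
  {D | ∃ pc ∈ S, ∃ θ : Subst F ar, D = Clause.subst θ pc.cl ∧ Clause.IsGround D}

/-! ### The PaRC calculus -/

def IsUnifier (σ : Subst F ar) (s t : Trm F ar) : Prop := Trm.subst σ s = Trm.subst σ t

def IsMGU (σ : Subst F ar) (s t : Trm F ar) : Prop :=
  IsUnifier σ s t ∧ ∀ η : Subst F ar, IsUnifier η s t → ∃ μ : Subst F ar, η = Subst.comp σ μ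

/-- A literal selection function satisfying the standard condition w.r.t. `≻`. -/
structure SelFun (F : Type) (ar : F → ℕ) (O : SimpOrd F ar) : Type where
  sel : Clause F ar → Set (Lit F ar)
  subset : ∀ C : Clause F ar, sel C ⊆ {L | L ∈ C}
  nonemptyOn : ∀ C : Clause F ar, C ≠ 0 → (sel C).Nonempty
  standard : ∀ C : Clause F ar,
    (∃ L ∈ sel C, L.pos = false) ∨ ∀ L ∈ sel C, ∀ M ∈ C, ¬ litGT O M L

/-- The inference rules of the PaRC calculus on partial clauses.
`Inf O sel prems σ concl` means: there is a PaRC inference with premises `prems`,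
most general unifier `σ`, and conclusion `concl`; selected literals are the displayed
first literals of the premises. -/
inductive Inf (O : SimpOrd F ar) (sel : SelFun F ar O) :
    List (PClause F ar) → Subst F ar → Clause F ar → Prop
  | sup {l r : Trm F ar} {C₁ : Clause F ar} {R₁ : RForm F ar}
      {h₁ : RForm.fvars R₁ ⊆ Clause.fvars (Lit.mk true l r ::ₘ C₁)}
      {b : Bool} {s t : Trm F ar} {C₂ : Clause F ar} {R₂ : RForm F ar}
      {h₂ : RForm.fvars R₂ ⊆ Clause.fvars (Lit.mk b s t ::ₘ C₂)}
      {p : List ℕ} {l' : Trm F ar} {σ : Subst F ar} :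
      Trm.atPos s p = some l' →
      (∀ x, l' ≠ .var x) →
      IsMGU σ l l' →
      Lit.mk true l r ∈ sel.sel (Lit.mk true l r ::ₘ C₁) →
      Lit.mk b s t ∈ sel.sel (Lit.mk b s t ::ₘ C₂) →
      ¬ RSat O σ (RForm.ge r l) →
      ¬ RSat O σ (RForm.ge t s) →
      ¬ RSat O σ (Clause.geForm C₁ l) →
      (b = true → ¬ RSat O σ (Clause.geForm C₂ s)) →
      ¬ RSat O σ R₁ →
      ¬ RSat O σ R₂ →
      Inf O sel [⟨Lit.mk true l r ::ₘ C₁, R₁, h₁⟩, ⟨Lit.mk b s t ::ₘ C₂, R₂, h₂⟩] σ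
        (Clause.subst σ (Lit.mk b (Trm.replace s p r) t ::ₘ (C₁ + C₂)))
  | eqres {s t : Trm F ar} {C : Clause F ar} {R : RForm F ar}
      {h : RForm.fvars R ⊆ Clause.fvars (Lit.mk false s t ::ₘ C)} {σ : Subst F ar} :
      IsMGU σ s t →
      Lit.mk false s t ∈ sel.sel (Lit.mk false s t ::ₘ C) →
      ¬ RSat O σ R →
      Inf O sel [⟨Lit.mk false s t ::ₘ C, R, h⟩] σ (Clause.subst σ C)
  | eqfac {s t s' t' : Trm F ar} {C : Clause F ar} {R : RForm F ar}
      {h : RForm.fvars R ⊆ Clause.fvars (Lit.mk true s t ::ₘ Lit.mk true s' t' ::ₘ C)}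
      {σ : Subst F ar} :
      IsMGU σ s s' →
      Lit.mk true s t ∈ sel.sel (Lit.mk true s t ::ₘ Lit.mk true s' t' ::ₘ C) →
      Lit.mk true s' t' ∈ sel.sel (Lit.mk true s t ::ₘ Lit.mk true s' t' ::ₘ C) →
      ¬ RSat O σ (RForm.ge t s) →
      ¬ RSat O σ (RForm.gt t' t) →
      ¬ RSat O σ (Clause.gtForm C s) →
      ¬ RSat O σ R →
      Inf O sel [⟨Lit.mk true s t ::ₘ Lit.mk true s' t' ::ₘ C, R, h⟩] σ
        (Clause.subst σ (Lit.mk true s t ::ₘ Lit.mk false t t' ::ₘ C))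

/-! ### Saturation -/

/-- A saturation w.r.t. the PaRC calculus: `S 0` consists of partial clauses of the
form `C ⋈ ⊥`, and each step is either an inference step or a redundancy step. -/
structure Saturation (O : SimpOrd F ar) (sel : SelFun F ar O) : Type where
  S : ℕ → Set (PClause F ar)
  init : ∀ pc ∈ S 0, pc.rf = RForm.falsum
  step : ∀ i : ℕ,
    (∃ (prems : List (PClause F ar)) (σ : Subst F ar) (concl : Clause F ar),
        (∀ pc ∈ prems, pc ∈ S i) ∧ Inf O sel prems σ concl ∧
        S (i + 1) = S i ∪ {⟨concl, RForm.falsum, RForm.falsum_fvars_sub _⟩}) ∨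
    (∃ pc ∈ S i, ∃ (R₂ : RForm F ar)
        (h : RForm.fvars (RForm.or pc.rf R₂) ⊆ Clause.fvars pc.cl),
        (∀ θ : Subst F ar, GroundingFor θ pc.cl → RSat O θ R₂ →
          Redundant O (gstar (S i)) (Clause.subst θ pc.cl)) ∧
        S (i + 1) = (S i \ {pc}) ∪ {⟨pc.cl, RForm.or pc.rf R₂, h⟩})

variable {O : SimpOrd F ar} {sel : SelFun F ar O}

/-- `S_ω = ⋃ i, S i`. -/
def Saturation.Somega (𝕊 : Saturation O sel) : Set (PClause F ar) := ⋃ i, 𝕊.S i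

/-- The limit `⋃_{i≥0} ⋂_{j≥i} ⌊S_j⌋` of a saturation. -/
def Saturation.limit (𝕊 : Saturation O sel) : Set (Clause F ar) :=
  ⋃ i : ℕ, ⋂ j : ℕ, ⋂ (_ : j ≥ i), gndS O (𝕊.S j)

/-- A ground clause is persistent if it belongs to the limit. -/
def Saturation.Persistent (𝕊 : Saturation O sel) (C : Clause F ar) : Prop := C ∈ 𝕊.limit

/-- Fairness of a saturation. -/
def Saturation.Fair (𝕊 : Saturation O sel) : Prop :=
  ∀ (prems : List (PClause F ar)) (σ : Subst F ar) (concl : Clause F ar) (ρ : Subst F ar),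
    Inf O sel prems σ concl →
    (∀ pc ∈ prems, 𝕊.Persistent (Clause.subst ρ (Clause.subst σ pc.cl))) →
    ∃ i : ℕ, (⟨concl, RForm.falsum, RForm.falsum_fvars_sub _⟩ : PClause F ar) ∈ 𝕊.S i

/-! ### Ground rewrite systems and the model construction -/

/-- One-step ground rewriting with a set of (ground) rewrite rules. -/
def Rw (I : Set (Trm F ar × Trm F ar)) (s t : Trm F ar) : Prop :=
  ∃ lr ∈ I, ∃ p : List ℕ, Trm.atPos s p = some lr.1 ∧ t = Trm.replace s p lr.2

def RwStar (I : Set (Trm F ar × Trm F ar)) : Trm F ar → Trm F ar → Prop :=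
  Relation.ReflTransGen (Rw I)

/-- A term is irreducible (a normal form) in `I`. -/
def NormalForm (I : Set (Trm F ar × Trm F ar)) (t : Trm F ar) : Prop := ∀ u, ¬ Rw I t u

/-- `s` and `t` have the same normal form in `I`. -/
def SameNF (I : Set (Trm F ar × Trm F ar)) (s t : Trm F ar) : Prop :=
  ∃ u : Trm F ar, RwStar I s u ∧ RwStar I t u ∧ NormalForm I u

/-- Truth of a ground clause in the interpretation given by a rewrite system. -/
def TrueIn (I : Set (Trm F ar × Trm F ar)) (C : Clause F ar) : Prop :=
  ∃ L ∈ C, if L.pos then SameNF I L.lhs L.rhs else ¬ SameNF I L.lhs L.rhs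

def NonOverlapping (I : Set (Trm F ar × Trm F ar)) : Prop :=
  ∀ lr ∈ I, ∀ lr' ∈ I, lr ≠ lr' → ∀ p : List ℕ, Trm.atPos (Prod.fst lr) p ≠ some (Prod.fst lr')

def Terminating (I : Set (Trm F ar × Trm F ar)) : Prop :=
  WellFounded (fun s t : Trm F ar => Rw I t s)

def Confluent (I : Set (Trm F ar × Trm F ar)) : Prop :=
  ∀ a b c : Trm F ar, RwStar I a b → RwStar I a c → ∃ d, RwStar I b d ∧ RwStar I c d

/-- The productivity condition of the model construction: there is a partial clause
`(l₁ ≈ r₁ ∨ C ⋈ R) ∈ S_ω` (with `l₁ ≈ r₁` selected) and a grounding substitution `θ`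
with `l₁θ = l`, `l₁θ ≻ r₁θ`, `l₁θ ≻ Cθ`, `θ ⊭ R`, `I_{≺l} ⊭ Cθ`, producing the rule
`l → rr` where `rr = r₁θ`. -/
def ProducesWith (O : SimpOrd F ar) (sel : SelFun F ar O) (Sω : Set (PClause F ar))
    (Ipre : Set (Trm F ar × Trm F ar)) (l rr : Trm F ar) : Prop :=
  ∃ (l₁ r₁ : Trm F ar) (C : Clause F ar) (R : RForm F ar)
    (h : RForm.fvars R ⊆ Clause.fvars (Lit.mk true l₁ r₁ ::ₘ C)) (θ : Subst F ar),
    (⟨Lit.mk true l₁ r₁ ::ₘ C, R, h⟩ : PClause F ar) ∈ Sω ∧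
    Lit.mk true l₁ r₁ ∈ sel.sel (Lit.mk true l₁ r₁ ::ₘ C) ∧
    GroundingFor θ (Lit.mk true l₁ r₁ ::ₘ C) ∧
    Trm.subst θ l₁ = l ∧
    O.gt (Trm.subst θ l₁) (Trm.subst θ r₁) ∧
    (∀ L ∈ Clause.subst θ C, O.gt (Trm.subst θ l₁) L.lhs ∧ O.gt (Trm.subst θ l₁) L.rhs) ∧
    ¬ RSat O θ R ∧
    ¬ TrueIn Ipre (Clause.subst θ C) ∧
    rr = Trm.subst θ r₁

/-- The rewrite system `I_l` of the model construction, defined by well-founded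
recursion on `≻`. -/
noncomputable def Interp (O : SimpOrd F ar) (sel : SelFun F ar O)
    (Sω : Set (PClause F ar)) : Trm F ar → Set (Trm F ar × Trm F ar) :=
  WellFounded.fix (C := fun _ => Set (Trm F ar × Trm F ar)) O.wf
    (fun l Irec =>
      let Ipre : Set (Trm F ar × Trm F ar) := ⋃ (r : Trm F ar), ⋃ (h : O.gt l r), Irec r h
      letI := Classical.propDecidable
      if h : NormalForm Ipre l ∧ ∃ rr, ProducesWith O sel Sω Ipre l rr then
        Ipre ∪ {(l, h.2.choose)}
      else Ipre)

/-- The rewrite system `I_{≺l}` of the model construction. -/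
noncomputable def IPre (O : SimpOrd F ar) (sel : SelFun F ar O)
    (Sω : Set (PClause F ar)) (l : Trm F ar) : Set (Trm F ar × Trm F ar) :=
  ⋃ (r : Trm F ar), ⋃ (_ : O.gt l r), Interp O sel Sω r

/-- The rewrite system `I_ω = ⋃_l I_l` of the model construction. -/
noncomputable def IOmega (O : SimpOrd F ar) (sel : SelFun F ar O)
    (Sω : Set (PClause F ar)) : Set (Trm F ar × Trm F ar) :=
  ⋃ (l : Trm F ar), Interp O sel Sω l

/-! Well-founded induction on the ground clause `D = Cθ` along the clause order. Clauses are
never deleted from a saturation, only annotated with weaker redundancy formulas. If `θ` satisfies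
none of the formulas attached to `C` along the way, then `D` stays in `⌊S_j⌋` from the moment `C`
appears, so `D` is persistent and `{D}` is a trace. Otherwise `θ ⊨ R₂` for the `R₂` added in some
redundancy step, so `D` is entailed by smaller ground instances of clauses of `S_ω`, and the union
of their traces, which exist by induction, is a trace of `D`. -/

section MultGT

open Function

variable {α : Type} {r : α → α → Prop} [IsStrictOrder α r]

theorem multGT_iff_isDershowitzMannaLT {M N : Multiset α} :
    MultGT r N M ↔
      @Multiset.IsDershowitzMannaLT α (partialOrderOfSO (swap r)).toPreorder M N := by
  constructor
  · rintro ⟨X, Y, Z, hX, rfl, rfl, hY⟩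
    exact ⟨Z, Y, X, hX, rfl, rfl, hY⟩
  · rintro ⟨Z, Y, X, hX, rfl, rfl, hY⟩
    exact ⟨X, Y, Z, hX, rfl, rfl, hY⟩

theorem MultGT.trans {N M P : Multiset α} (h₁ : MultGT r N M) (h₂ : MultGT r M P) :
    MultGT r N P := by
  let _ := partialOrderOfSO (swap r)
  rw [multGT_iff_isDershowitzMannaLT] at *
  exact h₂.trans h₁

theorem MultGT.wellFounded (hwf : WellFounded (swap r)) :
    WellFounded (swap (MultGT r : Multiset α → Multiset α → Prop)) := by
  let _ := partialOrderOfSO (swap r)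
  have : WellFoundedLT α := ⟨hwf⟩
  exact Subrelation.wf multGT_iff_isDershowitzMannaLT.1 Multiset.wellFounded_isDershowitzMannaLT

end MultGT

section ClauseOrder

open Function

instance SimpOrd.isStrictOrder (O : SimpOrd F ar) : IsStrictOrder (Trm F ar) O.gt where
  irrefl := O.irrefl
  trans _ _ _ := O.trans

theorem litGT_wellFounded : WellFounded (swap (litGT O)) :=
  InvImage.wf Lit.ms (MultGT.wellFounded O.wf)

instance litGT.isStrictOrder (O : SimpOrd F ar) : IsStrictOrder (Lit F ar) (litGT O) where
  irrefl := litGT_wellFounded.irrefl.irrefl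
  trans _ _ _ := MultGT.trans

theorem clauseGT_wellFounded : WellFounded (swap (clauseGT O)) :=
  MultGT.wellFounded litGT_wellFounded

theorem clauseGT_of_clauseGT_of_clauseGE {A B D : Clause F ar} (h₁ : clauseGT O A B)
    (h₂ : clauseGE O B D) : clauseGT O A D := by
  rcases h₂ with h₂ | rfl
  · exact MultGT.trans h₁ h₂
  · exact h₁

end ClauseOrder

theorem Trm.subst_congr {v w : Subst F ar} :
    ∀ {t : Trm F ar}, (∀ x ∈ t.fvars, v x = w x) → t.subst v = t.subst w
  | .var x, h => h x rfl
  | .app f a, h => by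
    simp only [Trm.subst, Trm.app.injEq, heq_eq_eq, true_and]
    exact funext fun i => Trm.subst_congr fun x hx => h x (Set.mem_iUnion.2 ⟨i, hx⟩)

theorem Trm.IsGround.notMem_fvars {x : ℕ} : ∀ {t : Trm F ar}, t.IsGround → x ∉ t.fvars
  | .app _ a, h => by
    simp only [Trm.fvars, Set.mem_iUnion, not_exists]
    exact fun i => (h i).notMem_fvars

theorem Trm.isGround_of_isGround_subst {v : Subst F ar} :
    ∀ {t : Trm F ar}, (t.subst v).IsGround → ∀ x ∈ t.fvars, (v x).IsGround
  | .var _, h, _, rfl => h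
  | .app _ a, h, x, hx => by
    obtain ⟨i, hi⟩ := Set.mem_iUnion.1 hx
    exact Trm.isGround_of_isGround_subst (h i) x hi

theorem Trm.mem_fvars_subst {v : Subst F ar} {x : ℕ} :
    ∀ {t : Trm F ar}, x ∈ (t.subst v).fvars → ∃ y ∈ t.fvars, x ∈ (v y).fvars
  | .var y, h => ⟨y, rfl, h⟩
  | .app _ a, h => by
    obtain ⟨i, hi⟩ := Set.mem_iUnion.1 h
    obtain ⟨y, hy, hx⟩ := Trm.mem_fvars_subst hi
    exact ⟨y, Set.mem_iUnion.2 ⟨i, hy⟩, hx⟩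

theorem GroundingFor.isGround_apply {θ : Subst F ar} {C : Clause F ar} (hθ : GroundingFor θ C) :
    ∀ x ∈ C.fvars, (θ x).IsGround := by
  rintro x ⟨L, hL, hx⟩
  have hLθ : (L.subst θ).IsGround := hθ _ (Multiset.mem_map_of_mem _ hL)
  rcases hx with hx | hx
  · exact Trm.isGround_of_isGround_subst hLθ.1 x hx
  · exact Trm.isGround_of_isGround_subst hLθ.2 x hx

theorem RForm.mem_fvars_subst {x : ℕ} {R : RForm F ar} {v : Subst F ar}
    (h : x ∈ (R.subst v).fvars) : ∃ y ∈ R.fvars, x ∈ (v y).fvars := by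
  induction R generalizing v with
  | falsum | verum => exact absurd h (Set.notMem_empty x)
  | eq s t | gt s t =>
    rcases h with h | h
    · obtain ⟨y, hy, hx⟩ := Trm.mem_fvars_subst h; exact ⟨y, Or.inl hy, hx⟩
    · obtain ⟨y, hy, hx⟩ := Trm.mem_fvars_subst h; exact ⟨y, Or.inr hy, hx⟩
  | and a b iha ihb | or a b iha ihb =>
    rcases h with h | h
    · obtain ⟨y, hy, hx⟩ := iha h; exact ⟨y, Or.inl hy, hx⟩
    · obtain ⟨y, hy, hx⟩ := ihb h; exact ⟨y, Or.inr hy, hx⟩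
  | ex z a iha =>
    obtain ⟨h, hxz⟩ := h
    obtain ⟨y, hy, hx⟩ := iha h
    by_cases hyz : y = z
    · subst hyz
      rw [if_pos rfl] at hx
      exact absurd hx hxz
    · rw [if_neg hyz] at hx
      exact ⟨y, ⟨hy, hyz⟩, hx⟩

theorem RForm.realize_congr {R : RForm F ar} {v w : Subst F ar}
    (h : ∀ x ∈ R.fvars, v x = w x) : R.realize O v ↔ R.realize O w := by
  induction R generalizing v w with
  | falsum | verum => exact Iff.rfl
  | eq s t | gt s t =>
    simp only [RForm.realize]
    rw [Trm.subst_congr fun x hx => h x (Or.inl hx), Trm.subst_congr fun x hx => h x (Or.inr hx)]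
  | and a b iha ihb | or a b iha ihb =>
    simp only [RForm.realize]
    rw [iha fun x hx => h x (Or.inl hx), ihb fun x hx => h x (Or.inr hx)]
  | ex z a iha =>
    refine exists_congr fun g => and_congr_right fun _ => iha fun x hx => ?_
    by_cases hxz : x = z
    · subst hxz; simp only [Function.update_self]
    · rw [Function.update_of_ne hxz, Function.update_of_ne hxz]
      exact h x ⟨hx, hxz⟩

theorem RForm.fvars_subst_eq_empty {R : RForm F ar} {θ : Subst F ar}
    (h : ∀ x ∈ R.fvars, (θ x).IsGround) : (R.subst θ).fvars = ∅ :=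
  Set.eq_empty_of_forall_notMem fun _ hx =>
    let ⟨y, hy, hxy⟩ := RForm.mem_fvars_subst hx
    (h y hy).notMem_fvars hxy

theorem RSat.or_of_or {θ : Subst F ar} {A B : RForm F ar} (hB : (B.subst θ).fvars = ∅)
    (h : RSat O θ (.or A B)) : RSat O θ A ∨ RSat O θ B := by
  by_cases hBθ : RSat O θ B
  · exact Or.inr hBθ
  obtain ⟨w, hw, hBw⟩ := not_forall₂.1 hBθ
  refine Or.inl fun v hv => (h v hv).resolve_right fun hBv => hBw ?_
  exact (RForm.realize_congr fun x hx => absurd hx (hB ▸ Set.notMem_empty x)).1 hBv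

-- `RSat` quantifies over ground valuations, so without a ground term every formula would hold.
theorem not_rsat_falsum (hconst : ∃ c : F, ar c = 0) (θ : Subst F ar) :
    ¬ RSat O θ .falsum := by
  obtain ⟨c, hc⟩ := hconst
  have hg : (Trm.app c fun i => (Fin.cast hc i).elim0 : Trm F ar).IsGround :=
    fun i => (Fin.cast hc i).elim0
  exact fun h => h _ fun _ => hg

theorem gstar_mono {S T : Set (PClause F ar)} (h : S ⊆ T) : gstar S ⊆ gstar T :=
  fun _ ⟨pc, hpc, θ, hD⟩ => ⟨pc, h hpc, θ, hD⟩

theorem Redundant.mono {S T : Set (Clause F ar)} {D : Clause F ar} (h : S ⊆ T)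
    (hD : Redundant O S D) : Redundant O T D :=
  let ⟨Cs, hCs, hent, hlt⟩ := hD
  ⟨Cs, fun C hC => h (hCs C hC), hent, hlt⟩

namespace Saturation

variable (𝕊 : Saturation O sel)

theorem S_subset_Somega (i : ℕ) : 𝕊.S i ⊆ 𝕊.Somega :=
  Set.subset_iUnion 𝕊.S i

theorem exists_mem_cl_eq {i j : ℕ} {pc : PClause F ar} (hpc : pc ∈ 𝕊.S i) (hij : i ≤ j) :
    ∃ pc' ∈ 𝕊.S j, pc'.cl = pc.cl := by
  induction j, hij using Nat.le_induction with
  | base => exact ⟨pc, hpc, rfl⟩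
  | succ j _ ih =>
    obtain ⟨pc', hpc', hcl⟩ := ih
    rcases 𝕊.step j with ⟨_, _, _, _, _, hS⟩ | ⟨pc'', -, R₂, hR₂, -, hS⟩
    · exact ⟨pc', hS ▸ Or.inl hpc', hcl⟩
    · by_cases hpc'' : pc' = pc''
      · exact ⟨⟨pc''.cl, .or pc''.rf R₂, hR₂⟩, hS ▸ Or.inr rfl, hpc'' ▸ hcl⟩
      · exact ⟨pc', hS ▸ Or.inl ⟨hpc', hpc''⟩, hcl⟩

theorem redundant_of_rsat (hconst : ∃ c : F, ar c = 0) (j : ℕ) :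
    ∀ pc ∈ 𝕊.S j, ∀ θ : Subst F ar, GroundingFor θ pc.cl → RSat O θ pc.rf →
      Redundant O (gstar 𝕊.Somega) (pc.cl.subst θ) := by
  induction j with
  | zero =>
    intro pc hpc θ _ hθR
    exact absurd (𝕊.init pc hpc ▸ hθR) (not_rsat_falsum hconst θ)
  | succ j ih =>
    intro pc hpc θ hθ hθR
    rcases 𝕊.step j with ⟨_, _, _, _, _, hS⟩ | ⟨pc', hpc', R₂, hR₂, hred, hS⟩
    · rw [hS] at hpc
      rcases hpc with hpc | rfl
      · exact ih pc hpc θ hθ hθR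
      · exact absurd hθR (not_rsat_falsum hconst θ)
    · rw [hS] at hpc
      rcases hpc with ⟨hpc, -⟩ | rfl
      · exact ih pc hpc θ hθ hθR
      · have hR₂θ : (R₂.subst θ).fvars = ∅ :=
          RForm.fvars_subst_eq_empty fun x hx => hθ.isGround_apply x (hR₂ (Or.inr hx))
        rcases hθR.or_of_or hR₂θ with hθR | hθR₂
        · exact ih pc' hpc' θ hθ hθR
        · exact (hred θ hθ hθR₂).mono (gstar_mono (𝕊.S_subset_Somega j))

theorem persistent_or_redundant (hconst : ∃ c : F, ar c = 0) {pc : PClause F ar}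
    (hpc : pc ∈ 𝕊.Somega) {θ : Subst F ar} (hθ : GroundingFor θ pc.cl) :
    𝕊.Persistent (pc.cl.subst θ) ∨ Redundant O (gstar 𝕊.Somega) (pc.cl.subst θ) := by
  by_cases hsat : ∃ j, ∃ pc' ∈ 𝕊.S j, pc'.cl = pc.cl ∧ RSat O θ pc'.rf
  · obtain ⟨j, pc', hpc', hcl, hθR⟩ := hsat
    exact Or.inr (hcl ▸ 𝕊.redundant_of_rsat hconst j pc' hpc' θ (hcl ▸ hθ) hθR)
  · push Not at hsat
    obtain ⟨i, hi⟩ := Set.mem_iUnion.1 hpc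
    refine Or.inl (Set.mem_iUnion.2 ⟨i, Set.mem_iInter₂.2 fun j hij => ?_⟩)
    obtain ⟨pc', hpc', hcl⟩ := 𝕊.exists_mem_cl_eq hi hij
    exact Set.mem_biUnion hpc' ⟨θ, hcl ▸ rfl, hθ, hsat j pc' hpc' hcl⟩

def HasTrace (D : Clause F ar) : Prop :=
  ∃ Cs : List (Clause F ar), (∀ E ∈ Cs, 𝕊.Persistent E) ∧
    Entails {E | E ∈ Cs} D ∧ ∀ E ∈ Cs, clauseGE O D E

variable {𝕊}

theorem Persistent.hasTrace {D : Clause F ar} (hD : 𝕊.Persistent D) : 𝕊.HasTrace D :=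
  ⟨[D], by simpa using hD, fun _ hA => hA D (List.mem_singleton_self D),
    by simp [clauseGE]⟩

theorem HasTrace.of_redundant {T : Set (Clause F ar)} {D : Clause F ar} (hD : Redundant O T D)
    (hT : ∀ E ∈ T, clauseGT O D E → 𝕊.HasTrace E) : 𝕊.HasTrace D := by
  obtain ⟨Cs, hCsT, hent, hlt⟩ := hD
  choose tr htrP htrE htrGE using fun E (hE : E ∈ Cs) => hT E (hCsT E hE) (hlt E hE)
  have mem_tr {G : Clause F ar} : G ∈ Cs.attach.flatMap (fun E => tr E.1 E.2) ↔
      ∃ E, ∃ hE : E ∈ Cs, G ∈ tr E hE := by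
    simp [List.mem_flatMap]
  refine ⟨Cs.attach.flatMap fun E => tr E.1 E.2, fun G hG => ?_, fun A hA => ?_, fun G hG => ?_⟩
  · obtain ⟨E, hE, hG⟩ := mem_tr.1 hG
    exact htrP E hE G hG
  · exact hent A fun E hE => htrE E hE A fun G hG => hA G (mem_tr.2 ⟨E, hE, hG⟩)
  · obtain ⟨E, hE, hG⟩ := mem_tr.1 hG
    exact Or.inl (clauseGT_of_clauseGT_of_clauseGE (hlt E hE) (htrGE E hE G hG))

variable (𝕊)

theorem hasTrace_of_mem_gstar (hconst : ∃ c : F, ar c = 0) :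
    ∀ D ∈ gstar 𝕊.Somega, 𝕊.HasTrace D := by
  intro D
  induction D using (clauseGT_wellFounded (O := O)).induction with
  | _ D ih =>
    rintro ⟨pc, hpc, θ, rfl, hθ⟩
    rcases 𝕊.persistent_or_redundant hconst hpc hθ with hpers | hred
    · exact hpers.hasTrace
    · exact HasTrace.of_redundant hred fun E hE hlt => ih E hlt hE

end Saturation

theorem trace_exists_general {F : Type} {ar : F → ℕ} (hconst : ∃ c : F, ar c = 0)
    (O : SimpOrd F ar) (sel : SelFun F ar O) (𝕊 : Saturation O sel)
    (C : Clause F ar) (R : RForm F ar) (h : RForm.fvars R ⊆ Clause.fvars C)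
    (hmem : (⟨C, R, h⟩ : PClause F ar) ∈ 𝕊.Somega)
    (θ : Subst F ar) (hθ : GroundingFor θ C) :
    ∃ Cs : List (Clause F ar), (∀ D ∈ Cs, 𝕊.Persistent D) ∧
      Entails {D : Clause F ar | D ∈ Cs} (Clause.subst θ C) ∧
      ∀ D ∈ Cs, clauseGE O (Clause.subst θ C) D :=
  𝕊.hasTrace_of_mem_gstar hconst _ ⟨_, hmem, θ, rfl, hθ⟩

/-- Every ground instance of a clause occurring in `S_ω` has a
trace: a finite set of persistent ground clauses that entail it and are all
smaller than or equal to it. -/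
theorem trace_exists {F : Type} {ar : F → ℕ} (hF : Finite F) (hconst : ∃ c : F, ar c = 0)
    (O : SimpOrd F ar) (sel : SelFun F ar O) (𝕊 : Saturation O sel)
    (C : Clause F ar) (R : RForm F ar) (h : RForm.fvars R ⊆ Clause.fvars C)
    (hmem : (⟨C, R, h⟩ : PClause F ar) ∈ 𝕊.Somega)
    (θ : Subst F ar) (hθ : GroundingFor θ C) :
    ∃ Cs : List (Clause F ar), (∀ D ∈ Cs, 𝕊.Persistent D) ∧
      Entails {D : Clause F ar | D ∈ Cs} (Clause.subst θ C) ∧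
      ∀ D ∈ Cs, clauseGE O (Clause.subst θ C) D :=
  trace_exists_general hconst O sel 𝕊 C R h hmem θ hθ

end PaRC
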